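/- arXiv:2408.13827 — 4 statements merged into one kernel-verified Lean document; each statement's English description precedes it below -/
import Mathlib

section
/- Let (V, g) be a finite-dimensional inner product space, h skew-symmetric, and f skew-symmetric with hf + fh = 0. If X is a unit eigenvector of h² with eigenvalue -λ² (λ > 0) and fX ≠ 0, then X, fX, hX, and hfX are pairwise orthogonal nonzero eigenvectors of h² with eigenvalue -λ². -/
open scoped RealInnerProductSpace

/-- for skew-symmetric anticommuting `h, f`, a unit eigenvector
`X` of `h²` with eigenvalue `-λ²` (`λ > 0`, `fX ≠ 0`) generates four pairwise
orthogonal nonzero eigenvectors `X, fX, hX, hfX` of `h²` with eigenvalue `-λ²`. -/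
theorem skew_anticommute_four_eigenvectors
    {V : Type*} [NormedAddCommGroup V] [InnerProductSpace ℝ V]
    [FiniteDimensional ℝ V]
    (h f : V →ₗ[ℝ] V)
    (hskewh : ∀ X Y, ⟪h X, Y⟫ = -⟪X, h Y⟫)
    (hskewf : ∀ X Y, ⟪f X, Y⟫ = -⟪X, f Y⟫)
    (hanti : ∀ X, h (f X) + f (h X) = 0)
    (X : V) (lam : ℝ) (hlam : 0 < lam) (hXunit : ‖X‖ = 1) (hfX : f X ≠ 0)
    (heig : h (h X) = (-(lam ^ 2)) • X) :
    (h X ≠ 0 ∧ h (f X) ≠ 0) ∧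
    (h (h (f X)) = (-(lam ^ 2)) • f X ∧
     h (h (h X)) = (-(lam ^ 2)) • h X ∧
     h (h (h (f X))) = (-(lam ^ 2)) • h (f X)) ∧
    (⟪X, f X⟫ = 0 ∧ ⟪X, h X⟫ = 0 ∧ ⟪X, h (f X)⟫ = 0 ∧
     ⟪f X, h X⟫ = 0 ∧ ⟪f X, h (f X)⟫ = 0 ∧ ⟪h X, h (f X)⟫ = 0) := by
  have anti : ∀ Y, h (f Y) = - f (h Y) := fun Y => eq_neg_of_add_eq_zero_left (hanti Y)
  have hX0 : X ≠ 0 := by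
    intro h0; rw [h0, norm_zero] at hXunit; norm_num at hXunit
  have lamne : -(lam ^ 2) ≠ 0 := by nlinarith
  have hself : ∀ Y, ⟪Y, h Y⟫ = 0 := by
    intro Y
    have a := hskewh Y Y
    have c := real_inner_comm Y (h Y)
    linarith
  have hfself : ∀ Y, ⟪Y, f Y⟫ = 0 := by
    intro Y
    have a := hskewf Y Y
    have c := real_inner_comm Y (f Y)
    linarith
  have e1 : h (h (f X)) = (-(lam ^ 2)) • f X := by
    rw [anti X, map_neg, anti (h X), neg_neg, heig, map_smul]
  have e2 : h (h (h X)) = (-(lam ^ 2)) • h X := by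
    rw [heig, map_smul]
  have e3 : h (h (h (f X))) = (-(lam ^ 2)) • h (f X) := by
    rw [e1, map_smul]
  have hhX : h X ≠ 0 := by
    intro h0
    have : (-(lam ^ 2)) • X = 0 := by rw [← heig, h0, map_zero]
    rcases smul_eq_zero.mp this with h1 | h2
    · exact lamne h1
    · exact hX0 h2
  have hhfX : h (f X) ≠ 0 := by
    intro h0
    have : (-(lam ^ 2)) • f X = 0 := by rw [← e1, h0, map_zero]
    rcases smul_eq_zero.mp this with h1 | h2
    · exact lamne h1
    · exact hfX h2
  have o1 : ⟪X, f X⟫ = 0 := hfself X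
  have o2 : ⟪X, h X⟫ = 0 := hself X
  have o4 : ⟪f X, h X⟫ = 0 := by
    have a := hskewh (f X) X
    have b := hskewf (h X) X
    rw [anti X, inner_neg_left, b] at a
    have c := real_inner_comm (f X) (h X)
    linarith
  have o3 : ⟪X, h (f X)⟫ = 0 := by
    have a := hskewh (f X) X
    have c := real_inner_comm (h (f X)) X
    linarith
  have o5 : ⟪f X, h (f X)⟫ = 0 := hself (f X)
  have o6 : ⟪h X, h (f X)⟫ = 0 := by
    have a := hskewh (h X) (f X)
    rw [heig, real_inner_smul_left, o1] at a
    linarith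
  exact ⟨⟨hhX, hhfX⟩, ⟨e1, e2, e3⟩, o1, o2, o3, o4, o5, o6⟩
end

section
/- On a weak K-contact manifold M^{2n+1}(f, Q, ξ, η, g), the Ricci curvature satisfies Ric(ξ, ξ) = tr Q = 2n + tr Q̃, and hence Ric(ξ,ξ) > 0. -/
/-!
Since `R_{ξ,X}ξ = f²X` and `f` is skew-adjoint, each term of `Ric(ξ,ξ)` is `g(R_{eᵢ,ξ}ξ, eᵢ) =
-g(f²eᵢ, eᵢ) = ‖f eᵢ‖²`, so `Ric(ξ,ξ) = -tr f² = tr Q - tr(η ⊗ ξ) = tr Q - 1`. The sum is positive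
because `f` vanishes only if `V` is spanned by `ξ`, impossible in dimension `2n + 1 ≥ 3`.
-/

open scoped RealInnerProductSpace

open LinearMap

section

variable {V : Type*} [NormedAddCommGroup V] [InnerProductSpace ℝ V]

theorem inner_apply_apply_self_of_skew {f : V →ₗ[ℝ] V} (hskew : ∀ X Y, ⟪f X, Y⟫ = -⟪X, f Y⟫)
    (X : V) : ⟪f (f X), X⟫ = -‖f X‖ ^ 2 := by
  rw [hskew, real_inner_self_eq_norm_sq]

theorem trace_comp_self_of_skew [FiniteDimensional ℝ V] {ι : Type*} [Fintype ι]
    {f : V →ₗ[ℝ] V} (hskew : ∀ X Y, ⟪f X, Y⟫ = -⟪X, f Y⟫) (b : OrthonormalBasis ι ℝ V) :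
    trace ℝ V (f ∘ₗ f) = -∑ i, ‖f (b i)‖ ^ 2 := by
  rw [trace_eq_sum_inner _ b, ← Finset.sum_neg_distrib]
  refine Finset.sum_congr rfl fun i _ => ?_
  rw [comp_apply, real_inner_comm, inner_apply_apply_self_of_skew hskew]

theorem trace_comp_self_of_sq_eq [FiniteDimensional ℝ V] {f Q : V →ₗ[ℝ] V} {ξ : V}
    (hf2 : ∀ X, f (f X) = -(Q X) + ⟪X, ξ⟫ • ξ) :
    trace ℝ V (f ∘ₗ f) = ⟪ξ, ξ⟫ - trace ℝ V Q := by
  have hsq : f ∘ₗ f = -Q + (innerₗ V ξ).smulRight ξ := by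
    ext X
    simp [hf2, real_inner_comm]
  rw [hsq, map_add, map_neg, trace_smulRight, innerₗ_apply_apply]
  ring

theorem ne_zero_of_ker_subset_span {f : V →ₗ[ℝ] V} {ξ : V}
    (hker : ∀ X, f X = 0 → ∃ c : ℝ, X = c • ξ) (hV : 1 < Module.finrank ℝ V) : f ≠ 0 := by
  rintro rfl
  exact hV.not_ge <| finrank_le_one ξ fun X => (hker X rfl).imp fun _ hc => hc.symm

theorem sum_norm_sq_apply_pos {ι : Type*} [Fintype ι] (b : OrthonormalBasis ι ℝ V)
    {f : V →ₗ[ℝ] V} (hf : f ≠ 0) : 0 < ∑ i, ‖f (b i)‖ ^ 2 := by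
  refine (Finset.sum_nonneg fun i _ => sq_nonneg _).lt_of_ne fun hzero => hf ?_
  rw [eq_comm, Finset.sum_eq_zero_iff_of_nonneg fun i _ => sq_nonneg _] at hzero
  refine b.toBasis.ext fun i => ?_
  simpa using hzero i (Finset.mem_univ i)

end

theorem weak_K_contact_Ric_xi_xi_general
    {V : Type*} [NormedAddCommGroup V] [InnerProductSpace ℝ V]
    [FiniteDimensional ℝ V]
    (n : ℕ) (hn : 0 < n) (hdim : Module.finrank ℝ V = 2 * n + 1)
    (f Q : V →ₗ[ℝ] V) (ξ : V) (hunit : ⟪ξ, ξ⟫ = 1)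
    (hf2 : ∀ X, f (f X) = -(Q X) + ⟪X, ξ⟫ • ξ)
    (hskew : ∀ X Y, ⟪f X, Y⟫ = -⟪X, f Y⟫)
    (hker : ∀ X, f X = 0 → ∃ c : ℝ, X = c • ξ)
    (R : V → V → V → V)
    (hR : ∀ X, R ξ X ξ = f (f X))
    (hRalt : ∀ X Y Z, R X Y Z = -(R Y X Z)) :
    (∑ i, ⟪R (stdOrthonormalBasis ℝ V i) ξ ξ, stdOrthonormalBasis ℝ V i⟫) =
      2 * n + LinearMap.trace ℝ V (Q - LinearMap.id) ∧
    0 < ∑ i, ⟪R (stdOrthonormalBasis ℝ V i) ξ ξ, stdOrthonormalBasis ℝ V i⟫ := by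
  set b := stdOrthonormalBasis ℝ V
  have hRic : ∑ i, ⟪R (b i) ξ ξ, b i⟫ = ∑ i, ‖f (b i)‖ ^ 2 :=
    Finset.sum_congr rfl fun i _ => by
      rw [hRalt, hR, inner_neg_left, inner_apply_apply_self_of_skew hskew, neg_neg]
  have htrace : ∑ i, ‖f (b i)‖ ^ 2 = trace ℝ V Q - 1 := by
    rw [← neg_neg (∑ i, _), ← trace_comp_self_of_skew hskew b, trace_comp_self_of_sq_eq hf2, hunit]
    ring
  refine ⟨?_, hRic ▸ sum_norm_sq_apply_pos b (ne_zero_of_ker_subset_span hker (by omega))⟩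
  rw [hRic, htrace, map_sub, trace_id, hdim]
  push_cast
  ring

/-- pointwise version: on a weak K-contact manifold
`M^{2n+1}(f,Q,ξ,η,g)` (where `R_{ξ,X}ξ = f²X`), the Ricci curvature
`Ric(ξ,ξ) = Σᵢ g(R_{eᵢ,ξ}ξ, eᵢ)` equals `2n + tr Q̃` with `Q̃ = Q - id`
(the trace of `Q` on the contact distribution), and `Ric(ξ,ξ) > 0`. -/
theorem weak_K_contact_Ric_xi_xi
    {V : Type*} [NormedAddCommGroup V] [InnerProductSpace ℝ V]
    [FiniteDimensional ℝ V]
    (n : ℕ) (hn : 0 < n) (hdim : Module.finrank ℝ V = 2 * n + 1)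
    (f Q : V →ₗ[ℝ] V) (ξ : V) (hunit : ⟪ξ, ξ⟫ = 1)
    (hf2 : ∀ X, f (f X) = -(Q X) + ⟪X, ξ⟫ • ξ)
    (hQξ : Q ξ = ξ) (hfξ : f ξ = 0)
    (hskew : ∀ X Y, ⟪f X, Y⟫ = -⟪X, f Y⟫)
    (hker : ∀ X, f X = 0 → ∃ c : ℝ, X = c • ξ)
    (R : V → V → V → V)
    (hR : ∀ X, R ξ X ξ = f (f X))
    (hRalt : ∀ X Y Z, R X Y Z = -(R Y X Z)) :
    (∑ i, ⟪R (stdOrthonormalBasis ℝ V i) ξ ξ, stdOrthonormalBasis ℝ V i⟫) =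
      2 * n + LinearMap.trace ℝ V (Q - LinearMap.id) ∧
    0 < ∑ i, ⟪R (stdOrthonormalBasis ℝ V i) ξ ξ, stdOrthonormalBasis ℝ V i⟫ :=
  weak_K_contact_Ric_xi_xi_general n hn hdim f Q ξ hunit hf2 hskew hker R hR hRalt
end

section
/- Let (f, Q, ξ, η, g) be a weak K-contact structure with ∇ξ = -f and R_{ξ,X}ξ = f²X. Then for unit X ∈ ker η, the ξ-sectional curvature satisfies K(ξ, X) = g(QX, X) > 0. -/
open scoped RealInnerProductSpace

/-- pointwise version: on a weak K-contact structure with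
`∇ξ = -f` and `R_{ξ,X}ξ = f²X`, the ξ-sectional curvature of a unit
`X ∈ ker η` is `K(ξ,X) = g(R_{X,ξ}ξ, X) = g(QX, X) > 0`. -/
theorem weak_K_contact_xi_sectional_curvature
    {V : Type*} [NormedAddCommGroup V] [InnerProductSpace ℝ V]
    (f Q : V →ₗ[ℝ] V) (ξ : V) (hunit : ⟪ξ, ξ⟫ = 1)
    (hf2 : ∀ X, f (f X) = -(Q X) + ⟪X, ξ⟫ • ξ)
    (hQξ : Q ξ = ξ) (hfξ : f ξ = 0)
    (hskew : ∀ X Y, ⟪f X, Y⟫ = -⟪X, f Y⟫)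
    (hker : ∀ X, f X = 0 → ∃ c : ℝ, X = c • ξ)
    (R : V → V → V → V)
    (hR : ∀ X, R ξ X ξ = f (f X))
    (hRalt : ∀ X Y Z, R X Y Z = -(R Y X Z)) :
    ∀ X, ⟪X, ξ⟫ = 0 → ‖X‖ = 1 →
      ⟪R X ξ ξ, X⟫ = ⟪Q X, X⟫ ∧ 0 < ⟪Q X, X⟫ := by
  intro X hη hX
  have hff : f (f X) = -(Q X) := by
    rw [hf2 X, hη, zero_smul, add_zero]
  have h1 : R X ξ ξ = Q X := by
    rw [hRalt X ξ ξ, hR X, hff, neg_neg]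
  have hQ : ⟪Q X, X⟫ = ⟪f X, f X⟫ := by
    have := hskew (f X) X
    rw [hskew X (f X)] at this
    have h2 : ⟪f (f X), X⟫ = -⟪f X, f X⟫ := by
      rw [hskew (f X) X, real_inner_comm]
    rw [hff] at h2
    have : ⟪-(Q X), X⟫ = -⟪Q X, X⟫ := by simp
    linarith [h2, this]
  constructor
  · rw [h1]
  · rw [hQ]
    rcases eq_or_ne (f X) 0 with h | h
    · exfalso
      obtain ⟨c, hc⟩ := hker X h
      rw [hc] at hη
      rw [real_inner_smul_left, hunit, mul_one] at hη
      rw [hc, hη, zero_smul, norm_zero] at hX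
      norm_num at hX
    · have : 0 < ‖f X‖ := norm_pos_iff.mpr h
      rw [real_inner_self_eq_norm_sq]
      positivity
end

section
/- Let (f, Q, ξ, η, g) be a weak almost contact metric structure on an inner product space with Q|_{ker η} = λ·id, λ > 0, and define g̃ by g̃|_{ker η} = λ^{1/2} g|_{ker η}, g̃(ξ, ·) = g(ξ, ·), with ξ ⊥ ker η for both metrics, and f̃ = λ^{-1/2} f. Then g̃(f̃ X, f̃ Y) = g̃(X, Y) - η(X)η(Y), i.e., (f̃, ξ, η, g̃) is an almost contact metric structure. -/
open scoped RealInnerProductSpace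

/-- with `Q|_{ker η} = λ·id`, `λ > 0`, the rescaled metric
`g̃` (equal to `√λ · g` on `ker η` and to `g` in the `ξ`-directions) and
`f̃ = λ^{-1/2} f` satisfy `g̃(f̃X, f̃Y) = g̃(X,Y) - η(X)η(Y)`, i.e.
`(f̃, ξ, η, g̃)` is an almost contact metric structure. -/
theorem rescaled_weak_structure_metric_compatibility
    {V : Type*} [NormedAddCommGroup V] [InnerProductSpace ℝ V]
    (f Q : V →ₗ[ℝ] V) (ξ : V) (η : V →ₗ[ℝ] ℝ) (lam : ℝ) (hlam : 0 < lam)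
    (hf2 : ∀ X, f (f X) = -(Q X) + η X • ξ)
    (hηξ : η ξ = 1) (hQξ : Q ξ = ξ) (hfξ : f ξ = 0)
    (hηf : ∀ X, η (f X) = 0)
    (hηg : ∀ X, η X = ⟪X, ξ⟫)
    (hcomp : ∀ X Y, ⟪f X, f Y⟫ = ⟪X, Q Y⟫ - η X * η Y)
    (hQlam : ∀ X, η X = 0 → Q X = lam • X)
    (gt : V →ₗ[ℝ] V →ₗ[ℝ] ℝ)
    (hgt_ker : ∀ X Y, η X = 0 → η Y = 0 → gt X Y = Real.sqrt lam * ⟪X, Y⟫)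
    (hgt_ξl : ∀ X, gt ξ X = ⟪ξ, X⟫)
    (hgt_ξr : ∀ X, gt X ξ = ⟪X, ξ⟫) :
    ∀ X Y, gt ((Real.sqrt lam)⁻¹ • f X) ((Real.sqrt lam)⁻¹ • f Y) =
      gt X Y - η X * η Y := by
  intro X Y
  have hs : Real.sqrt lam ≠ 0 := ne_of_gt (Real.sqrt_pos.mpr hlam)
  have hsq : Real.sqrt lam * Real.sqrt lam = lam := Real.mul_self_sqrt hlam.le
  have hX' : η (X - η X • ξ) = 0 := by simp [hηξ]
  have hY' : η (Y - η Y • ξ) = 0 := by simp [hηξ]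
  have hiX : ⟪X - η X • ξ, ξ⟫ = 0 := by rw [← hηg]; exact hX'
  have hiY : ⟪Y - η Y • ξ, ξ⟫ = 0 := by rw [← hηg]; exact hY'
  have hiY' : ⟪ξ, Y - η Y • ξ⟫ = 0 := by rw [real_inner_comm]; exact hiY
  have hξξ : ⟪ξ, ξ⟫ = (1:ℝ) := by rw [← hηg]; exact hηξ
  -- decompose gt X Y
  have hXY : gt X Y = η X * η Y + Real.sqrt lam * ⟪X - η X • ξ, Y - η Y • ξ⟫ := by
    have h1 : gt (X - η X • ξ) (Y - η Y • ξ)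
        = Real.sqrt lam * ⟪X - η X • ξ, Y - η Y • ξ⟫ := hgt_ker _ _ hX' hY'
    have h2 : gt (X - η X • ξ) (Y - η Y • ξ)
        = gt X Y - η Y * gt X ξ - η X * gt ξ Y + η X * η Y * gt ξ ξ := by
      simp [map_sub, map_smul, LinearMap.sub_apply, LinearMap.smul_apply, smul_eq_mul]
      ring
    rw [h2] at h1
    rw [hgt_ξr, hgt_ξl, hgt_ξl] at h1
    have e1 : ⟪X, ξ⟫ = η X := (hηg X).symm
    have e2 : ⟪ξ, Y⟫ = η Y := by rw [real_inner_comm]; exact (hηg Y).symm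
    rw [e1, e2, hξξ] at h1
    linarith [h1]
  -- compute QY
  have hQY : Q Y = η Y • ξ + lam • (Y - η Y • ξ) := by
    have := hQlam _ hY'
    have h2 : Q Y = η Y • Q ξ + Q (Y - η Y • ξ) := by
      rw [← map_smul, ← map_add]; congr 1; abel
    rw [h2, hQξ, this]
  have hinner : ⟪X, Q Y⟫ = η X * η Y + lam * ⟪X - η X • ξ, Y - η Y • ξ⟫ := by
    rw [hQY]
    rw [inner_add_right, real_inner_smul_right, real_inner_smul_right]
    have e1 : ⟪X, ξ⟫ = η X := (hηg X).symm
    have e3 : ⟪X, Y - η Y • ξ⟫ = ⟪X - η X • ξ, Y - η Y • ξ⟫ := by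
      rw [inner_sub_left, real_inner_smul_left, hiY', mul_zero, sub_zero]
    rw [e1, e3]; ring
  -- LHS
  have hlhs : gt ((Real.sqrt lam)⁻¹ • f X) ((Real.sqrt lam)⁻¹ • f Y)
      = (Real.sqrt lam)⁻¹ * ((Real.sqrt lam)⁻¹ * (Real.sqrt lam * ⟪f X, f Y⟫)) := by
    simp only [map_smul, LinearMap.smul_apply, smul_eq_mul]
    rw [hgt_ker _ _ (hηf X) (hηf Y)]
  rw [hlhs, hcomp, hinner, hXY]
  field_simp
  ring_nf
  rw [show Real.sqrt lam ^ 2 = lam by rw [sq, hsq]]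
  ring
end
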